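/- Let e be a directed segment with p strictly to its left but p ∉ F, where F is a convex polygon having e on its boundary. Then there exists an edge e' of F with p strictly to the right of e' and with celestial distance Dist(e', p) strictly smaller than Dist(e, p). -/

import Mathlib

open Metric RealInnerProductSpace

noncomputable section

abbrev Pt := EuclideanSpace ℝ (Fin 2)

/-- 2D determinant (orientation test). -/
def det2 (x y : Pt) : ℝ := x 0 * y 1 - x 1 * y 0

lemma isCompact_seg (a b : Pt) : IsCompact (segment ℝ a b) := by
  rw [segment_eq_image']
  exact isCompact_Icc.image (by continuity)

/-- A closest point of the segment `[a,b]` to `p`. -/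
def closestPt (a b p : Pt) : Pt :=
  Classical.choose ((isCompact_seg a b).exists_infDist_eq_dist
    ⟨a, left_mem_segment ℝ a b⟩ p)

/-- The wide angle (≥ π/2) between segment `[a,b]` and the segment from `p`
to its closest point on `[a,b]`, or `0` if `p` lies on the segment. -/
def wideAngle (a b p : Pt) : ℝ :=
  if infDist p (segment ℝ a b) = 0 then 0
  else max (InnerProductGeometry.angle (p - closestPt a b p) (a - closestPt a b p))
           (InnerProductGeometry.angle (p - closestPt a b p) (b - closestPt a b p))

/-- Celestial distance of edge `[a,b]` to `p`. -/
def celestialDist (a b p : Pt) : ℝ × ℝ :=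
  (infDist p (segment ℝ a b), wideAngle a b p)

/-- Lexicographic comparison of celestial distances. -/
def cLt (x y : ℝ × ℝ) : Prop := x.1 < y.1 ∨ (x.1 = y.1 ∧ x.2 < y.2)

end


/-!
Let `q` be the point of `F` nearest to `p` and `w = p - q`. Then `F` lies in the half-plane
`⟪w, x - q⟫ ≤ 0`, every edge through `q` is at distance `‖w‖` from `p`, and its closest point to
`p` is `q`. If `e` is farther than `‖w‖`, it suffices to find an edge through `q` with `p` strictly
to its right: either an edge of the supporting line through `q` that crosses `q` in the direction
of `w⊥`, or one of the two edges at the vertex `q`. If `e` is at distance `‖w‖`, then `q` is an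
endpoint of `e` (an interior point would flatten `F` onto the line of `e`); the other edge at `q`
then has `p` strictly to its right, and since `F` turns strictly at `q`, it makes a smaller angle
with `w` than `e` does.
-/

section PlanarAlgebra

lemma inner_eq_coord (x y : Pt) : ⟪x, y⟫ = x 0 * y 0 + x 1 * y 1 := by
  simp only [PiLp.inner_apply, RCLike.inner_apply, Real.ringHom_apply, Fin.sum_univ_two]; ring

lemma norm_sq_eq_coord (x : Pt) : ‖x‖ ^ 2 = x 0 ^ 2 + x 1 ^ 2 := by
  rw [← real_inner_self_eq_norm_sq, inner_eq_coord]; ring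

lemma det2_swap (x y : Pt) : det2 y x = -det2 x y := by
  simp only [det2]; ring

lemma det2_self (x : Pt) : det2 x x = 0 := by
  simp only [det2]; ring

lemma det2_zero_right (w : Pt) : det2 w 0 = 0 := by
  simp [det2]

lemma det2_add_right (w x y : Pt) : det2 w (x + y) = det2 w x + det2 w y := by
  simp only [det2, PiLp.add_apply]; ring

lemma det2_sub_right (w x y : Pt) : det2 w (x - y) = det2 w x - det2 w y := by
  simp only [det2, PiLp.sub_apply]; ring

lemma det2_sub_comm (w x y : Pt) : det2 w (x - y) = -det2 w (y - x) := by
  simp only [det2, PiLp.sub_apply]; ring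

lemma det2_smul_right (w x : Pt) (r : ℝ) : det2 w (r • x) = r * det2 w x := by
  simp only [det2, PiLp.smul_apply, smul_eq_mul]; ring

def det2L (w : Pt) : Pt →ₗ[ℝ] ℝ where
  toFun := det2 w
  map_add' := det2_add_right w
  map_smul' r x := det2_smul_right w x r

@[simp]
lemma det2L_apply (w x : Pt) : det2L w x = det2 w x := rfl

-- `⟪w, ·⟫` and `det2 w` are the coordinates in the orthogonal frame `(w, w⊥)`, scaled by `‖w‖`.
lemma det2_mul_norm_sq (w x y : Pt) :
    det2 x y * ‖w‖ ^ 2 = ⟪w, x⟫ * det2 w y - det2 w x * ⟪w, y⟫ := by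
  rw [inner_eq_coord, inner_eq_coord, norm_sq_eq_coord]; simp only [det2]; ring

lemma det2_sub_mul_norm_sq (w q x y z : Pt) :
    det2 (y - x) (z - x) * ‖w‖ ^ 2 =
      (⟪w, y - q⟫ - ⟪w, x - q⟫) * (det2 w (z - q) - det2 w (x - q)) -
        (det2 w (y - q) - det2 w (x - q)) * (⟪w, z - q⟫ - ⟪w, x - q⟫) := by
  simp only [inner_eq_coord, norm_sq_eq_coord, det2, PiLp.sub_apply]; ring

lemma inner_sq_add_det2_sq (w z : Pt) : ⟪w, z⟫ ^ 2 + det2 w z ^ 2 = ‖w‖ ^ 2 * ‖z‖ ^ 2 := by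
  rw [inner_eq_coord, norm_sq_eq_coord, norm_sq_eq_coord]; simp only [det2]; ring

lemma eq_of_inner_eq_of_det2_eq {w x y : Pt} (hw : w ≠ 0) (hP : ⟪w, x⟫ = ⟪w, y⟫)
    (hD : det2 w x = det2 w y) : x = y := by
  have h := inner_sq_add_det2_sq w (x - y)
  rw [inner_sub_right, det2_sub_right, hP, hD, sub_self, sub_self] at h
  rw [← sub_eq_zero]
  simpa [hw] using h.symm

def rot (u : Pt) : Pt := !₂[-u 1, u 0]

lemma inner_rot (u z : Pt) : ⟪rot u, z⟫ = det2 u z := by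
  simp only [rot, inner_eq_coord, det2, Matrix.cons_val_zero, Matrix.cons_val_one,
    Matrix.cons_val_fin_one]
  ring

lemma rot_ne_zero {u : Pt} (hu : u ≠ 0) : rot u ≠ 0 := by
  intro h
  apply hu
  have h0 := congrFun (congrArg (⇑) h) 0
  have h1 := congrFun (congrArg (⇑) h) 1
  simp only [rot, Matrix.cons_val_zero, PiLp.zero_apply, neg_eq_zero, Matrix.cons_val_one,
    Matrix.cons_val_fin_one] at h0 h1
  ext i; fin_cases i <;> simp [h0, h1]

end PlanarAlgebra

section Convexity

variable {E : Type*}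

lemma exists_apply_ne_of_interior_convexHull_nonempty [NormedAddCommGroup E] [NormedSpace ℝ E]
    [FiniteDimensional ℝ E] {s : Set E} (hs : (interior (convexHull ℝ s)).Nonempty)
    {f : E →ₗ[ℝ] ℝ} (hf : f ≠ 0) (c : ℝ) : ∃ x ∈ s, f x ≠ c := by
  by_contra! h
  have hsub : convexHull ℝ s ⊆ f ⁻¹' {c} :=
    convexHull_min h ((convex_singleton c).linear_preimage f)
  obtain ⟨x, hx⟩ := hs
  have hopen := f.isOpenMap_of_finiteDimensional (LinearMap.surjective hf)
  simpa using hopen.interior_preimage_subset_preimage_interior (interior_mono hsub hx)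

lemma convex_setOf_lex_lt [AddCommGroup E] [Module ℝ E] (f g : E →ₗ[ℝ] ℝ) (a b : ℝ) :
    Convex ℝ {y | f y < a ∨ (f y = a ∧ g y < b)} := by
  intro x hx y hy s t hs ht hst
  rcases hs.eq_or_lt with rfl | hs
  · simp_all
  rcases ht.eq_or_lt with rfl | ht
  · simp_all
  simp only [Set.mem_ofPred_eq, map_add, map_smul, smul_eq_mul] at hx hy ⊢
  have hfy : f y ≤ a := hy.elim le_of_lt fun h => h.1.le
  have ha : a = s * a + t * a := by rw [← add_mul, hst, one_mul]
  have hb : b = s * b + t * b := by rw [← add_mul, hst, one_mul]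
  rcases hx with hx | ⟨hfx, hgx⟩
  · left; nlinarith [mul_lt_mul_of_pos_left hx hs, mul_le_mul_of_nonneg_left hfy ht.le]
  rcases hy with hy | ⟨hfy, hgy⟩
  · left; nlinarith [mul_lt_mul_of_pos_left hy ht]
  right
  constructor
  · rw [hfx, hfy, ← ha]
  · nlinarith [mul_lt_mul_of_pos_left hgx hs, mul_lt_mul_of_pos_left hgy ht]

lemma exists_mem_eq_and_le_of_mem_convexHull [AddCommGroup E] [Module ℝ E] (f g : E →ₗ[ℝ] ℝ)
    {s : Set E} {x : E} (hx : x ∈ convexHull ℝ s) (hf : ∀ y ∈ s, f y ≤ f x) :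
    ∃ y ∈ s, f y = f x ∧ g x ≤ g y := by
  by_contra! h
  have hsub : s ⊆ {y | f y < f x ∨ (f y = f x ∧ g y < g x)} := fun y hy =>
    (hf y hy).lt_or_eq.imp_right fun hfy => ⟨hfy, h y hy hfy⟩
  rcases convexHull_min hsub (convex_setOf_lex_lt f g _ _) hx with h | h
  · exact h.false
  · exact h.2.false

end Convexity

section NearestPoint

variable {E : Type*} [NormedAddCommGroup E] [InnerProductSpace ℝ E] {K : Set E} {p q : E}

lemma inner_sub_nonpos_of_infDist_eq (hK : Convex ℝ K) (hq : q ∈ K)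
    (hpq : infDist p K = dist p q) {x : E} (hx : x ∈ K) : ⟪p - q, x - q⟫ ≤ 0 := by
  refine (norm_eq_iInf_iff_real_inner_le_zero hK hq).mp ?_ x hx
  simpa only [← dist_eq_norm, infDist_eq_iInf] using hpq.symm

lemma eq_of_infDist_eq (hK : Convex ℝ K) (hq : q ∈ K) (hpq : infDist p K = dist p q)
    {x : E} (hx : x ∈ K) (hpx : infDist p K = dist p x) : x = q := by
  have h1 := inner_sub_nonpos_of_infDist_eq hK hq hpq hx
  have h2 := inner_sub_nonpos_of_infDist_eq hK hx hpx hq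
  have h : ‖x - q‖ ^ 2 = ⟪p - q, x - q⟫ + ⟪p - x, q - x⟫ := by
    rw [← real_inner_self_eq_norm_sq, ← neg_sub x q, inner_neg_right, ← sub_eq_add_neg,
      ← inner_sub_left, sub_sub_sub_cancel_left]
  rw [← sub_eq_zero, ← norm_eq_zero]
  nlinarith [norm_nonneg (x - q)]

end NearestPoint

open Fin.CommRing in
lemma Fin.exists_and_not_add_one {n : ℕ} [NeZero n] {S : Fin n → Prop} {a b : Fin n}
    (ha : S a) (hb : ¬S b) : ∃ j, S j ∧ ¬S (j + 1) := by
  by_contra! h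
  have hS : ∀ m : ℕ, S (a + m) := by
    intro m
    induction m with
    | zero => simpa using ha
    | succ m ih => simpa [add_assoc] using h _ ih
  exact hb (by simpa using hS (b - a : Fin n))

section Angles

open InnerProductGeometry

variable {E : Type*} [NormedAddCommGroup E] [InnerProductSpace ℝ E]

lemma pi_div_two_le_angle_of_inner_nonpos {x y : E} (h : ⟪x, y⟫ ≤ 0) : Real.pi / 2 ≤ angle x y :=
  not_lt.mp fun hlt => (Real.arccos_lt_pi_div_two.mp hlt).not_ge
    (div_nonpos_of_nonpos_of_nonneg h (mul_nonneg (norm_nonneg x) (norm_nonneg y)))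

lemma angle_lt_angle_of_inner_mul_norm_lt {w x y : E} (hw : w ≠ 0) (hx : x ≠ 0) (hy : y ≠ 0)
    (h : ⟪w, y⟫ * ‖x‖ < ⟪w, x⟫ * ‖y‖) : angle w x < angle w y := by
  rw [← Real.strictAntiOn_cos.lt_iff_gt ⟨angle_nonneg w y, angle_le_pi w y⟩
    ⟨angle_nonneg w x, angle_le_pi w x⟩, cos_angle, cos_angle,
    div_lt_div_iff₀ (by positivity) (by positivity)]
  have := norm_pos_iff.mpr hw
  nlinarith

end Angles

/-- The situation at a vertex `q` of the polygon in frame coordinates `(P, D) = (⟪w, ·⟫, det2 w ·)`,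
with `W = ‖w‖ ^ 2`: the indices `i`, `o`, `c` refer to the vectors from `q` to the previous vertex,
to the next vertex, and to a vertex strictly left of the outgoing edge; `ni`, `no` are norms. -/
lemma vertex_frame_ineq {W Pi Di Po Do Pc Dc ni no : ℝ} (hW : 0 < W) (hni : 0 < ni)
    (hno : 0 < no) (hi : Pi ^ 2 + Di ^ 2 = W * ni ^ 2) (ho : Po ^ 2 + Do ^ 2 = W * no ^ 2)
    (hPi : Pi ≤ 0) (hPo : Po ≤ 0) (hPc : Pc ≤ 0) (hturn : 0 ≤ Po * Di - Do * Pi)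
    (hcout : 0 < Po * Dc - Do * Pc) (hcin : Pi * Dc - Di * Pc ≤ 0) (hDo : Do ≤ 0) :
    Di < 0 ∧ Po * ni < Pi * no := by
  have hturn' : 0 < Po * Di - Do * Pi := by
    refine hturn.lt_of_ne fun h0 => ?_
    have h1 : Po * (Pi * Dc - Di * Pc) = Pi * (Po * Dc - Do * Pc) := by
      linear_combination Pc * h0
    have hPi0 : Pi = 0 := by
      have := mul_nonneg_of_nonpos_of_nonpos hPo hcin
      nlinarith
    have hDi0 : Di ≠ 0 := by
      rintro rfl
      rw [hPi0] at hi
      nlinarith [mul_pos hW (pow_pos hni 2)]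
    have hPo0 : Po = 0 := by
      rw [hPi0, mul_zero, sub_zero] at h0
      exact (mul_eq_zero.mp h0.symm).resolve_right hDi0
    rw [hPo0, zero_mul, zero_sub] at hcout
    nlinarith [mul_nonneg_of_nonpos_of_nonpos hDo hPc]
  have hDi : Di < 0 := by nlinarith
  refine ⟨hDi, ?_⟩
  -- cosine comparison of the unit vectors `(P, D) / n`, after clearing denominators
  have key : (Po * ni - Pi * no) * (W * ni * no + Pi * Po + Di * Do) =
      (Po * Di - Do * Pi) * (Di * no + Do * ni) := by
    linear_combination (-Po * no) * hi + (Pi * ni) * ho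
  have hpos : 0 < W * ni * no + Pi * Po + Di * Do := by
    have := mul_pos (mul_pos hW hni) hno
    nlinarith [mul_nonneg_of_nonpos_of_nonpos hPi hPo, mul_nonneg_of_nonpos_of_nonpos hDi.le hDo]
  have hneg : (Po * Di - Do * Pi) * (Di * no + Do * ni) < 0 :=
    mul_neg_of_pos_of_neg hturn' (by nlinarith)
  by_contra! h
  nlinarith [mul_nonneg (sub_nonneg.mpr h) hpos.le]

section Polygon

variable {n : ℕ} {v : Fin n → Pt}

def IsConvexCCW [NeZero n] (v : Fin n → Pt) : Prop :=
  ∀ i j : Fin n, 0 ≤ det2 (v (i + 1) - v i) (v j - v i)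

lemma exists_inner_sub_ne (hint : (interior (convexHull ℝ (Set.range v))).Nonempty) {u : Pt}
    (hu : u ≠ 0) (x₀ : Pt) : ∃ k, ⟪u, v k - x₀⟫ ≠ 0 := by
  have hf : innerₗ Pt u ≠ 0 := fun h => hu <| by
    simpa using LinearMap.congr_fun h u
  obtain ⟨_, ⟨k, rfl⟩, hk⟩ := exists_apply_ne_of_interior_convexHull_nonempty hint hf ⟪u, x₀⟫
  exact ⟨k, by rwa [inner_sub_right, sub_ne_zero]⟩

lemma exists_det2_sub_ne (hint : (interior (convexHull ℝ (Set.range v))).Nonempty) {u : Pt}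
    (hu : u ≠ 0) (x₀ : Pt) : ∃ k, det2 u (v k - x₀) ≠ 0 := by
  simpa only [inner_rot] using exists_inner_sub_ne hint (rot_ne_zero hu) x₀

lemma IsConvexCCW.det2_sub_nonpos [NeZero n] (hccw : IsConvexCCW v) {j : Fin n} {q : Pt}
    (hj : v (j + 1) = q) (k : Fin n) : det2 (v j - q) (v k - q) ≤ 0 := by
  have h := hccw j k
  rw [hj, ← neg_sub (v j) q, show v k - v j = (v k - q) - (v j - q) by abel] at h
  simp only [det2, PiLp.neg_apply, PiLp.sub_apply] at h ⊢
  linarith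

lemma IsConvexCCW.det2_sub_nonneg [NeZero n] (hccw : IsConvexCCW v) {j : Fin n} {q : Pt}
    (hj : v j = q) (k : Fin n) : 0 ≤ det2 (v (j + 1) - q) (v k - q) :=
  hj ▸ hccw j k

open InnerProductGeometry in
lemma IsConvexCCW.vertex_ineq [NeZero n] (hccw : IsConvexCCW v)
    (hint : (interior (convexHull ℝ (Set.range v))).Nonempty) {w q : Pt} (hw : w ≠ 0)
    (hP : ∀ k, ⟪w, v k - q⟫ ≤ 0) {j j' : Fin n} (hj : v j ≠ q) (hj1 : v (j + 1) = q)
    (hj' : v j' = q) (hj'1 : v (j' + 1) ≠ q) :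
    (det2 w (v (j' + 1) - q) ≤ 0 →
      det2 w (v j - q) < 0 ∧ angle w (v j - q) < angle w (v (j' + 1) - q)) ∧
    (0 ≤ det2 w (v j - q) →
      0 < det2 w (v (j' + 1) - q) ∧ angle w (v (j' + 1) - q) < angle w (v j - q)) := by
  have hzi : v j - q ≠ 0 := sub_ne_zero.mpr hj
  have hzo : v (j' + 1) - q ≠ 0 := sub_ne_zero.mpr hj'1
  have hW : 0 < ‖w‖ ^ 2 := by positivity
  have hin := hccw.det2_sub_nonpos hj1
  have hout := hccw.det2_sub_nonneg hj'
  obtain ⟨c, hc⟩ := exists_det2_sub_ne hint hzo q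
  obtain ⟨c', hc'⟩ := exists_det2_sub_ne hint hzi q
  have hturn := mul_nonneg (hout j) hW.le
  have hcout := mul_pos ((hout c).lt_of_ne' hc) hW
  have hcin := mul_nonpos_of_nonpos_of_nonneg (hin c) hW.le
  have hcout' := mul_nonneg (hout c') hW.le
  have hcin' := mul_neg_of_neg_of_pos ((hin c').lt_of_ne hc') hW
  rw [det2_mul_norm_sq] at hturn hcout hcin hcout' hcin'
  have lagi := inner_sq_add_det2_sq w (v j - q)
  have lago := inner_sq_add_det2_sq w (v (j' + 1) - q)
  have hni := norm_pos_iff.mpr hzi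
  have hno := norm_pos_iff.mpr hzo
  constructor
  · intro hDo
    obtain ⟨hDi, hlt⟩ := vertex_frame_ineq hW hni hno lagi lago (hP j) (hP (j' + 1)) (hP c)
      hturn hcout hcin hDo
    exact ⟨hDi, angle_lt_angle_of_inner_mul_norm_lt hw hzi hzo hlt⟩
  · intro hDi
    -- the reflection `D ↦ -D` exchanges the roles of the two edges
    obtain ⟨hDo, hlt⟩ := vertex_frame_ineq hW hno hni (Di := -det2 w (v (j' + 1) - q))
      (Do := -det2 w (v j - q)) (Dc := -det2 w (v c' - q)) (by linear_combination lago)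
      (by linear_combination lagi) (hP (j' + 1)) (hP j) (hP c') (by linarith) (by linarith)
      (by linarith) (by linarith)
    exact ⟨neg_neg_iff_pos.mp hDo, angle_lt_angle_of_inner_mul_norm_lt hw hzo hzi hlt⟩

lemma mem_segment_of_inner_eq_zero {w a b q : Pt} (hw : w ≠ 0) (ha : ⟪w, a - q⟫ = 0)
    (hb : ⟪w, b - q⟫ = 0) (hDa : det2 w (a - q) ≤ 0) (hDb : 0 ≤ det2 w (b - q)) :
    q ∈ segment ℝ a b := by
  obtain ⟨s, t, hs, ht, hst, hst0⟩ : (0 : ℝ) ∈ segment ℝ (det2 w (a - q)) (det2 w (b - q)) := by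
    rw [segment_eq_Icc (hDa.trans hDb)]; exact ⟨hDa, hDb⟩
  have h0 : s • (a - q) + t • (b - q) = 0 :=
    eq_of_inner_eq_of_det2_eq hw
      (by simp only [inner_add_right, inner_smul_right, ha, hb, mul_zero, add_zero,
        inner_zero_right])
      (by simpa [det2_add_right, det2_smul_right, det2_zero_right] using hst0)
  refine ⟨s, t, hs, ht, hst, ?_⟩
  calc s • a + t • b = s • (a - q) + t • (b - q) + (s + t) • q := by
        rw [smul_sub, smul_sub, add_smul]; abel
    _ = q := by rw [h0, hst, zero_add, one_smul]

lemma det2_sub_of_mem_segment {a b q : Pt} (hq : q ∈ segment ℝ a b) (p : Pt) :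
    det2 (b - a) (p - a) = -det2 (p - q) (b - a) := by
  rw [segment_eq_image'] at hq
  obtain ⟨t, -, rfl⟩ := hq
  dsimp only
  rw [show p - a = (p - (a + t • (b - a))) + t • (b - a) by abel, det2_add_right,
    det2_smul_right, det2_self, mul_zero, add_zero, det2_swap]

lemma exists_inner_sub_eq_zero_and_le {w q : Pt} (hq : q ∈ convexHull ℝ (Set.range v))
    (hP : ∀ k, ⟪w, v k - q⟫ ≤ 0) (g : Pt →ₗ[ℝ] ℝ) : ∃ k, ⟪w, v k - q⟫ = 0 ∧ g q ≤ g (v k) := by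
  obtain ⟨_, ⟨k, rfl⟩, hk, hg⟩ := exists_mem_eq_and_le_of_mem_convexHull (innerₗ Pt w) g hq
    (by rintro _ ⟨k, rfl⟩; simpa [inner_sub_right] using hP k)
  exact ⟨k, by simpa [inner_sub_right, sub_eq_zero] using hk, hg⟩

/-- Walking along the polygon, the first step out of `{x | ⟪w, x - q⟫ = 0 ∧ det2 w (x - q) ≤ 0}`
cannot leave the supporting line (the vertex `v c` on it would be strictly right of that edge),
so it crosses `q`. -/
lemma IsConvexCCW.exists_edge_of_exists_above [NeZero n] (hccw : IsConvexCCW v) {w q : Pt}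
    (hw : w ≠ 0) (hP : ∀ k, ⟪w, v k - q⟫ ≤ 0) {b c : Fin n} (hb0 : ⟪w, v b - q⟫ = 0)
    (hb : det2 w (v b - q) ≤ 0) (hc0 : ⟪w, v c - q⟫ = 0) (hc : 0 < det2 w (v c - q)) :
    ∃ j, q ∈ segment ℝ (v j) (v (j + 1)) ∧ 0 < det2 w (v (j + 1) - v j) := by
  obtain ⟨j, ⟨hj0, hj⟩, hj1⟩ := Fin.exists_and_not_add_one
    (S := fun k => ⟪w, v k - q⟫ = 0 ∧ det2 w (v k - q) ≤ 0) ⟨hb0, hb⟩ (fun h => hc.not_ge h.2)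
  have hj10 : ⟪w, v (j + 1) - q⟫ = 0 := by
    refine (hP (j + 1)).antisymm (not_lt.mp fun hlt => ?_)
    have h := mul_nonneg (hccw j c) (sq_nonneg ‖w‖)
    rw [det2_sub_mul_norm_sq w q, hj0, hc0] at h
    nlinarith
  have hj1D : 0 < det2 w (v (j + 1) - q) := not_le.mp fun h => hj1 ⟨hj10, h⟩
  refine ⟨j, mem_segment_of_inner_eq_zero hw hj0 hj10 hj hj1D.le, ?_⟩
  rw [show v (j + 1) - v j = (v (j + 1) - q) - (v j - q) by abel, det2_sub_right]
  linarith

lemma IsConvexCCW.exists_edge_through [NeZero n] (hccw : IsConvexCCW v)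
    (hint : (interior (convexHull ℝ (Set.range v))).Nonempty) {w q : Pt} (hw : w ≠ 0)
    (hP : ∀ k, ⟪w, v k - q⟫ ≤ 0) (hq : q ∈ convexHull ℝ (Set.range v)) :
    ∃ j, q ∈ segment ℝ (v j) (v (j + 1)) ∧ 0 < det2 w (v (j + 1) - v j) := by
  obtain ⟨b, hb0, hb⟩ := exists_inner_sub_eq_zero_and_le hq hP (-det2L w)
  by_cases hc : ∃ c, ⟪w, v c - q⟫ = 0 ∧ 0 < det2 w (v c - q)
  · obtain ⟨c, hc0, hc⟩ := hc
    refine hccw.exists_edge_of_exists_above hw hP hb0 ?_ hc0 hc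
    simpa [det2_sub_right] using hb
  push Not at hc
  obtain ⟨a, ha0, ha⟩ := exists_inner_sub_eq_zero_and_le hq hP (det2L w)
  have haD := hc a ha0
  rw [det2L_apply, det2L_apply] at ha
  rw [det2_sub_right] at haD
  have haq : v a = q := eq_of_inner_eq_of_det2_eq hw
    (by rwa [inner_sub_right, sub_eq_zero] at ha0) (by linarith)
  obtain ⟨k, hk⟩ := exists_inner_sub_ne hint hw q
  have hkq : v k ≠ q := fun h => hk (by rw [h, sub_self, inner_zero_right])
  obtain ⟨j', hj', hj'1⟩ := Fin.exists_and_not_add_one (S := (v · = q)) haq hkq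
  obtain ⟨j, hj, hj1⟩ := Fin.exists_and_not_add_one (S := (v · ≠ q)) hkq (not_not.mpr haq)
  rw [not_not] at hj1
  by_cases hD : 0 < det2 w (v (j' + 1) - q)
  · exact ⟨j', hj' ▸ left_mem_segment ℝ _ _, hj' ▸ hD⟩
  · have hDi := ((hccw.vertex_ineq hint hw hP hj hj1 hj' hj'1).1 (not_lt.mp hD)).1
    refine ⟨j, hj1 ▸ right_mem_segment ℝ _ _, ?_⟩
    rw [hj1, det2_sub_comm]
    linarith

lemma IsConvexCCW.eq_or_eq_of_mem_segment [NeZero n] (hccw : IsConvexCCW v)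
    (hint : (interior (convexHull ℝ (Set.range v))).Nonempty) {w q : Pt}
    (hP : ∀ k, ⟪w, v k - q⟫ ≤ 0) {i : Fin n} (hq : q ∈ segment ℝ (v i) (v (i + 1)))
    (hleft : det2 w (v (i + 1) - v i) < 0) : q = v i ∨ q = v (i + 1) := by
  rw [← insert_endpoints_openSegment] at hq
  rcases hq with hq | hq | ⟨a, b, ha, hb, hab, hq⟩
  · exact Or.inl hq
  · exact Or.inr hq
  exfalso
  have hcomb : a • (v i - q) + b • (v (i + 1) - q) = 0 := by
    rw [smul_sub, smul_sub, sub_add_sub_comm, ← add_smul, hab, one_smul, hq, sub_self]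
  have hPcomb := congrArg (⟪w, ·⟫) hcomb
  simp only [inner_add_right, inner_smul_right, inner_zero_right] at hPcomb
  have hPi : ⟪w, v i - q⟫ = 0 := by nlinarith [hP i, hP (i + 1)]
  have hPi1 : ⟪w, v (i + 1) - q⟫ = 0 := by nlinarith [hP i, hP (i + 1)]
  have he : v (i + 1) - v i ≠ 0 := fun h => by simp [h, det2_zero_right] at hleft
  obtain ⟨k, hk⟩ := exists_det2_sub_ne hint he (v i)
  have h := det2_sub_mul_norm_sq w q (v i) (v (i + 1)) (v k)
  rw [hPi, hPi1, ← det2_sub_right w (v (i + 1) - q), sub_sub_sub_cancel_right] at h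
  have hW : 0 < ‖w‖ ^ 2 := by
    refine pow_pos (norm_pos_iff.mpr fun hw => ?_) 2
    simp [hw, det2] at hleft
  nlinarith [mul_pos ((hccw i k).lt_of_ne' hk) hW, mul_nonneg_of_nonpos_of_nonpos hleft.le (hP k)]

open InnerProductGeometry in
lemma IsConvexCCW.exists_edge_of_endpoint [NeZero n] (hccw : IsConvexCCW v)
    (hint : (interior (convexHull ℝ (Set.range v))).Nonempty) {w q : Pt} (hw : w ≠ 0)
    (hP : ∀ k, ⟪w, v k - q⟫ ≤ 0) {i : Fin n} (hq : q ∈ segment ℝ (v i) (v (i + 1)))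
    (hleft : det2 w (v (i + 1) - v i) < 0) :
    ∃ j, q ∈ segment ℝ (v j) (v (j + 1)) ∧ 0 < det2 w (v (j + 1) - v j) ∧
      max (angle w (v j - q)) (angle w (v (j + 1) - q)) <
        max (angle w (v i - q)) (angle w (v (i + 1) - q)) := by
  obtain ⟨k, hk⟩ := exists_inner_sub_ne hint hw q
  have hkq : v k ≠ q := fun h => hk (by rw [h, sub_self, inner_zero_right])
  have hπ k : Real.pi / 2 ≤ angle w (v k - q) := pi_div_two_le_angle_of_inner_nonpos (hP k)
  have hi : v (i + 1) ≠ v i := fun h => by simp [h, det2_zero_right] at hleft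
  rcases hccw.eq_or_eq_of_mem_segment hint hP hq hleft with rfl | rfl
  · obtain ⟨j, hj, hj1⟩ := Fin.exists_and_not_add_one (S := (v · ≠ v i)) hkq (not_not.mpr rfl)
    rw [not_not] at hj1
    obtain ⟨hD, hangle⟩ := (hccw.vertex_ineq hint hw hP hj hj1 rfl hi).1 hleft.le
    refine ⟨j, hj1 ▸ right_mem_segment ℝ _ _, by rw [hj1, det2_sub_comm]; linarith, ?_⟩
    rwa [hj1, sub_self, angle_zero_right, max_eq_left (hπ j), max_eq_right (hπ (i + 1))]
  · obtain ⟨j, hj, hj1⟩ := Fin.exists_and_not_add_one (S := (v · = v (i + 1))) rfl hkq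
    obtain ⟨hD, hangle⟩ := (hccw.vertex_ineq hint hw hP hi.symm rfl hj hj1).2
      (by rw [det2_sub_comm]; linarith)
    refine ⟨j, hj ▸ left_mem_segment ℝ _ _, hj ▸ hD, ?_⟩
    rwa [hj, sub_self, angle_zero_right, max_eq_right (hπ (j + 1)), max_eq_left (hπ i)]

lemma closestPt_spec (a b p : Pt) :
    closestPt a b p ∈ segment ℝ a b ∧ infDist p (segment ℝ a b) = dist p (closestPt a b p) :=
  Classical.choose_spec ((isCompact_seg a b).exists_infDist_eq_dist ⟨a, left_mem_segment ℝ a b⟩ p)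

lemma infDist_segment_eq_and_closestPt_eq {K : Set Pt} (hK : Convex ℝ K) {p q a b : Pt}
    (hqK : q ∈ K) (hpq : infDist p K = dist p q) (hsub : segment ℝ a b ⊆ K)
    (hq : q ∈ segment ℝ a b) :
    infDist p (segment ℝ a b) = infDist p K ∧ closestPt a b p = q := by
  have heq : infDist p (segment ℝ a b) = infDist p K :=
    ((infDist_le_dist_of_mem hq).trans hpq.ge).antisymm
      (infDist_le_infDist_of_subset hsub ⟨q, hq⟩)
  obtain ⟨hc, hdc⟩ := closestPt_spec a b p
  exact ⟨heq, eq_of_infDist_eq hK hqK hpq (hsub hc) (heq.symm.trans hdc)⟩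

lemma mem_segment_of_infDist_eq {K : Set Pt} (hK : Convex ℝ K) {p q a b : Pt} (hqK : q ∈ K)
    (hpq : infDist p K = dist p q) (hsub : segment ℝ a b ⊆ K)
    (h : infDist p K = infDist p (segment ℝ a b)) : q ∈ segment ℝ a b := by
  obtain ⟨hc, hdc⟩ := closestPt_spec a b p
  rwa [← eq_of_infDist_eq hK hqK hpq (hsub hc) (h.trans hdc)]

lemma wideAngle_eq_of_closestPt_eq {a b p q : Pt} (h0 : infDist p (segment ℝ a b) ≠ 0)
    (hq : closestPt a b p = q) :
    wideAngle a b p = max (InnerProductGeometry.angle (p - q) (a - q))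
      (InnerProductGeometry.angle (p - q) (b - q)) := by
  rw [wideAngle, if_neg h0, hq]

end Polygon

theorem celestial_progress_general
    (n : ℕ) [NeZero n] (v : Fin n → Pt)
    (hccw : ∀ i j : Fin n, 0 ≤ det2 (v (i + 1) - v i) (v j - v i))
    (hint : (interior (convexHull ℝ (Set.range v))).Nonempty)
    (i : Fin n) (p : Pt)
    (hleft : 0 < det2 (v (i + 1) - v i) (p - v i))
    (hp : p ∉ convexHull ℝ (Set.range v)) :
    ∃ j : Fin n, det2 (v (j + 1) - v j) (p - v j) < 0 ∧
      cLt (celestialDist (v j) (v (j + 1)) p) (celestialDist (v i) (v (i + 1)) p) := by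
  set F := convexHull ℝ (Set.range v)
  have hFc : Convex ℝ F := convex_convexHull ℝ _
  have hvF k : v k ∈ F := subset_convexHull ℝ _ ⟨k, rfl⟩
  have hsegF j : segment ℝ (v j) (v (j + 1)) ⊆ F := hFc.segment_subset (hvF j) (hvF (j + 1))
  have hFcpt : IsCompact F := (Set.finite_range v).isCompact_convexHull ℝ
  obtain ⟨q, hqF, hpq⟩ := hFcpt.exists_infDist_eq_dist ⟨v i, hvF i⟩ p
  have hw : p - q ≠ 0 := sub_ne_zero.mpr fun h => hp (h ▸ hqF)
  have hd : infDist p F ≠ 0 := ((hFcpt.isClosed.notMem_iff_infDist_pos ⟨q, hqF⟩).mp hp).ne'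
  have hP k : ⟪p - q, v k - q⟫ ≤ 0 := inner_sub_nonpos_of_infDist_eq hFc hqF hpq (hvF k)
  have hseg j := infDist_segment_eq_and_closestPt_eq hFc hqF hpq (hsegF j)
  have hright j (hj : q ∈ segment ℝ (v j) (v (j + 1))) (hD : 0 < det2 (p - q) (v (j + 1) - v j)) :
      det2 (v (j + 1) - v j) (p - v j) < 0 := by
    rw [det2_sub_of_mem_segment hj]; linarith
  rcases (infDist_le_infDist_of_subset (hsegF i) ⟨v i, left_mem_segment ℝ _ _⟩).lt_or_eq
    with hlt | htie
  · obtain ⟨j, hj, hD⟩ := IsConvexCCW.exists_edge_through hccw hint hw hP hqF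
    exact ⟨j, hright j hj hD, Or.inl ((hseg j hj).1.trans_lt hlt)⟩
  · have hqi := mem_segment_of_infDist_eq hFc hqF hpq (hsegF i) htie
    obtain ⟨j, hj, hD, hangle⟩ := IsConvexCCW.exists_edge_of_endpoint hccw hint hw hP hqi
      (by linarith [det2_sub_of_mem_segment hqi p])
    obtain ⟨hdj, hcj⟩ := hseg j hj
    obtain ⟨hdi, hci⟩ := hseg i hqi
    refine ⟨j, hright j hj hD, Or.inr ⟨hdj.trans hdi.symm, ?_⟩⟩
    rwa [celestialDist, celestialDist, wideAngle_eq_of_closestPt_eq (hdj ▸ hd) hcj,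
      wideAngle_eq_of_closestPt_eq (hdi ▸ hd) hci]

/-- Key progress lemma for the abstract celestial walk: if `p` is strictly to
the left of edge `e` (edge `i`) of a convex polygon `F` but `p ∉ F`, then some
edge `e'` of `F` has `p` strictly to its right and strictly smaller celestial
distance to `p` than `e`. -/
theorem celestial_progress
    (n : ℕ) [NeZero n] (hn : 3 ≤ n) (v : Fin n → Pt)
    (hccw : ∀ i j : Fin n, 0 ≤ det2 (v (i + 1) - v i) (v j - v i))
    (hint : (interior (convexHull ℝ (Set.range v))).Nonempty)
    (i : Fin n) (p : Pt)
    (hleft : 0 < det2 (v (i + 1) - v i) (p - v i))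
    (hp : p ∉ convexHull ℝ (Set.range v)) :
    ∃ j : Fin n, det2 (v (j + 1) - v j) (p - v j) < 0 ∧
      cLt (celestialDist (v j) (v (j + 1)) p) (celestialDist (v i) (v (i + 1)) p) :=
  celestial_progress_general n v hccw hint i p hleft hp
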